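/- arXiv:1202.6023 — 3 statements merged into one kernel-verified Lean document; each statement's English description precedes it below -/
import Mathlib

section
/- Let Λ ⊆ ℝ^N be a non-periodic Delone set. If Λ is linearly repetitive (LR), then Λ satisfies the repulsion property (RP), i.e. inf{r_pack(L_P)/r(P) : P a ball pattern on Λ} > 0. -/
open Filter MeasureTheory Bornology
open scoped ENNReal

noncomputable section

/-- Euclidean space `ℝ^N`. -/
abbrev Euc (N : ℕ) := EuclideanSpace ℝ (Fin N)

/-- The packing radius of a set: half of the infimum of distances between
distinct points (`⊤` if no such pair exists). -/
def rPack {N : ℕ} (Λ : Set (Euc N)) : ℝ≥0∞ :=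
  ⨅ (x ∈ Λ) (y ∈ Λ) (_ : x ≠ y), edist x y / 2

/-- The covering radius of a set: the supremum over all points of the space of
the distance to the set. -/
def rCov {N : ℕ} (Λ : Set (Euc N)) : ℝ≥0∞ :=
  ⨆ p : Euc N, EMetric.infEdist p Λ

/-- A set is uniformly discrete if its packing radius is positive. -/
def UniformlyDiscrete {N : ℕ} (Λ : Set (Euc N)) : Prop := 0 < rPack Λ

/-- A set is relatively dense if its covering radius is finite. -/
def RelativelyDense {N : ℕ} (Λ : Set (Euc N)) : Prop := rCov Λ < ⊤

/-- A Delone set is a uniformly discrete and relatively dense set. -/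
def IsDelone {N : ℕ} (Λ : Set (Euc N)) : Prop :=
  UniformlyDiscrete Λ ∧ RelativelyDense Λ

/-- Λ is non-periodic if no nonzero translate of Λ equals Λ. -/
def NonPeriodic {N : ℕ} (Λ : Set (Euc N)) : Prop :=
  ∀ t : Euc N, t ≠ 0 → (fun p => p - t) '' Λ ≠ Λ

/-- The patch of the ball pattern `(x, R)`: `(Λ - x) ∩ B_R`. -/
def patch {N : ℕ} (Λ : Set (Euc N)) (x : Euc N) (R : ℝ) : Set (Euc N) :=
  ((fun y => y - x) '' Λ) ∩ Metric.closedBall 0 R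

/-- The locater set of the ball pattern `(x, R)`: the set of points of Λ whose
`R`-patch agrees with that of `x`. -/
def locSet {N : ℕ} (Λ : Set (Euc N)) (x : Euc N) (R : ℝ) : Set (Euc N) :=
  {y ∈ Λ | patch Λ y R = patch Λ x R}

/-- Λ is repetitive if the locater set of every ball pattern is relatively dense. -/
def Repetitive {N : ℕ} (Λ : Set (Euc N)) : Prop :=
  ∀ x ∈ Λ, ∀ R : ℝ, 0 < R → RelativelyDense (locSet Λ x R)

/-- `L_P(Q)`: the points of the locater set of `(x,R)` whose `R`-ball lies inside `Q`. -/
def locIn {N : ℕ} (Λ : Set (Euc N)) (x : Euc N) (R : ℝ) (Q : Set (Euc N)) :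
    Set (Euc N) :=
  {y ∈ locSet Λ x R | Metric.closedBall y R ⊆ Q}

/-- `♯_P Q`: the number of copies of the ball pattern `P = (x,R)` in `Q`. -/
def countP {N : ℕ} (Λ : Set (Euc N)) (x : Euc N) (R : ℝ) (Q : Set (Euc N)) : ℕ :=
  (locIn Λ x R Q).ncard

/-- `♯'_P Q`: the maximal number of completely disjoint copies of `P = (x,R)` in `Q`. -/
def countP' {N : ℕ} (Λ : Set (Euc N)) (x : Euc N) (R : ℝ) (Q : Set (Euc N)) : ℕ :=
  sSup {n : ℕ | ∃ A : Finset (Euc N), ↑A ⊆ locIn Λ x R Q ∧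
    (∀ u ∈ A, ∀ v ∈ A, u ≠ v → 2 * R < dist u v) ∧ A.card = n}

/-- The cube with corner `a` and sidelength `s`. -/
def cube {N : ℕ} (a : Euc N) (s : ℝ) : Set (Euc N) :=
  {p | ∀ i, a i ≤ p i ∧ p i ≤ a i + s}

/-- The filter describing cubes `C` with `|C| → ∞`: arbitrary corner, sidelength
tending to infinity. -/
def cubeFilter (N : ℕ) : Filter (Euc N × ℝ) := (⊤ : Filter (Euc N)) ×ˢ atTop

/-- The Lebesgue measure `|B_R|` of a closed ball of radius `R` in `ℝ^N`. -/
def ballVol (N : ℕ) (R : ℝ) : ℝ := (volume (Metric.closedBall (0 : Euc N) R)).toReal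

/-- The lower density `ν(P)` of the ball pattern `P = (x,R)`:
`liminf_{|C|→∞} ♯_P C · |B_R| / |C|` over cubes `C`. -/
def nu {N : ℕ} (Λ : Set (Euc N)) (x : Euc N) (R : ℝ) : ℝ :=
  liminf (fun cs : Euc N × ℝ =>
    (countP Λ x R (cube cs.1 cs.2) : ℝ) * ballVol N R / cs.2 ^ N) (cubeFilter N)

/-- The lower reduced density `ν'(P)` of the ball pattern `P = (x,R)`:
`liminf_{|C|→∞} ♯'_P C · |B_R| / |C|` over cubes `C`. -/
def nu' {N : ℕ} (Λ : Set (Euc N)) (x : Euc N) (R : ℝ) : ℝ :=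
  liminf (fun cs : Euc N × ℝ =>
    (countP' Λ x R (cube cs.1 cs.2) : ℝ) * ballVol N R / cs.2 ^ N) (cubeFilter N)

/-- `w = inf {ν(P) : r(P) ≥ 1}`. -/
def wPW {N : ℕ} (Λ : Set (Euc N)) : ℝ :=
  sInf {v | ∃ x ∈ Λ, ∃ R : ℝ, 1 ≤ R ∧ v = nu Λ x R}

/-- `w' = inf {ν'(P) : r(P) ≥ 1}`. -/
def wPQ {N : ℕ} (Λ : Set (Euc N)) : ℝ :=
  sInf {v | ∃ x ∈ Λ, ∃ R : ℝ, 1 ≤ R ∧ v = nu' Λ x R}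

/-- Positivity of weights (PW). -/
def PW {N : ℕ} (Λ : Set (Euc N)) : Prop := 0 < wPW Λ

/-- Positivity of quasiweights (PQ). -/
def PQ {N : ℕ} (Λ : Set (Euc N)) : Prop := 0 < wPQ Λ

/-- A function on (bounded) subsets of `ℝ^N` is subadditive if
`F(Q₁ ∪ Q₂) ≤ F(Q₁) + F(Q₂)` for disjoint bounded `Q₁, Q₂`. -/
def SubadditiveFn {N : ℕ} (F : Set (Euc N) → ℝ) : Prop :=
  ∀ Q₁ Q₂ : Set (Euc N), IsBounded Q₁ → IsBounded Q₂ → Disjoint Q₁ Q₂ →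
    F (Q₁ ∪ Q₂) ≤ F Q₁ + F Q₂

/-- A function on (bounded) subsets is Λ-invariant if `F(Q) = F(t + Q)` whenever
`t + (Q ∩ Λ) = (t + Q) ∩ Λ`. -/
def InvariantFn {N : ℕ} (Λ : Set (Euc N)) (F : Set (Euc N) → ℝ) : Prop :=
  ∀ (t : Euc N) (Q : Set (Euc N)), IsBounded Q →
    (fun p => t + p) '' (Q ∩ Λ) = ((fun p => t + p) '' Q) ∩ Λ →
    F Q = F ((fun p => t + p) '' Q)

/-- Λ satisfies the subadditive ergodic theorem (SET) if for every subadditive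
Λ-invariant function `F` the limit `lim_{|C|→∞} F(C)/|C|` over cubes exists. -/
def SET {N : ℕ} (Λ : Set (Euc N)) : Prop :=
  ∀ F : Set (Euc N) → ℝ, SubadditiveFn F → InvariantFn Λ F →
    ∃ L : ℝ, Tendsto (fun cs : Euc N × ℝ => F (cube cs.1 cs.2) / cs.2 ^ N)
      (cubeFilter N) (nhds L)

/-- Linear repetitivity (LR): `sup {r_cov(L_P)/r(P) : r(P) ≥ 1} < ∞`. -/
def LR {N : ℕ} (Λ : Set (Euc N)) : Prop :=
  (⨆ (x ∈ Λ) (R : ℝ) (_ : 1 ≤ R), rCov (locSet Λ x R) / ENNReal.ofReal R) < ⊤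

/-- The repulsion property (RP): `inf {r_pack(L_P)/r(P) : P a ball pattern} > 0`. -/
def RP {N : ℕ} (Λ : Set (Euc N)) : Prop :=
  0 < ⨅ (x ∈ Λ) (R : ℝ) (_ : 0 < R), rPack (locSet Λ x R) / ENNReal.ofReal R

/-- The Voronoi cell of `x` with respect to `Γ`. -/
def voronoiCell {N : ℕ} (Γ : Set (Euc N)) (x : Euc N) : Set (Euc N) :=
  {p | ∀ y ∈ Γ, dist p x ≤ dist p y}

/-- The inner radius of a set `V` around `x`. -/
def rIn {N : ℕ} (x : Euc N) (V : Set (Euc N)) : ℝ≥0∞ :=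
  sSup {R : ℝ≥0∞ | EMetric.closedBall x R ⊆ V}

/-- The outer radius of a set `V` around `x`. -/
def rOut {N : ℕ} (x : Euc N) (V : Set (Euc N)) : ℝ≥0∞ :=
  sInf {R : ℝ≥0∞ | V ⊆ EMetric.closedBall x R}

/-- The distortion `λ(V) = r_out(V)/r_in(V)` of a set `V` around `x`. -/
def distortion {N : ℕ} (x : Euc N) (V : Set (Euc N)) : ℝ≥0∞ := rOut x V / rIn x V

/-- The distortion of a discrete set: the supremum of the distortions of its
Voronoi cells. -/
def setDistortion {N : ℕ} (Γ : Set (Euc N)) : ℝ≥0∞ :=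
  ⨆ x ∈ Γ, distortion x (voronoiCell Γ x)

/-- Uniformity of return words (U): the distortions of all locater sets of Λ are
uniformly bounded. -/
def URW {N : ℕ} (Λ : Set (Euc N)) : Prop :=
  (⨆ (x ∈ Λ) (R : ℝ) (_ : 0 < R), setDistortion (locSet Λ x R)) < ⊤

end


section Helpers

lemma mem_patch_iff {N : ℕ} (Λ : Set (Euc N)) (x v : Euc N) (R : ℝ) :
    v ∈ patch Λ x R ↔ x + v ∈ Λ ∧ ‖v‖ ≤ R := by
  constructor
  · rintro ⟨⟨a, ha, rfl⟩, hv⟩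
    rw [mem_closedBall_zero_iff] at hv
    exact ⟨by simpa using ha, hv⟩
  · rintro ⟨h1, h2⟩
    exact ⟨⟨x + v, h1, by simp⟩, mem_closedBall_zero_iff.mpr h2⟩

lemma patch_eq_period {N : ℕ} {Λ : Set (Euc N)} {y y' : Euc N} {R : ℝ}
    (h : patch Λ y R = patch Λ y' R) :
    ∀ v : Euc N, ‖v‖ ≤ R → (y + v ∈ Λ ↔ y' + v ∈ Λ) := by
  intro v hv
  have hx := Set.ext_iff.mp h v
  rw [mem_patch_iff, mem_patch_iff] at hx
  constructor
  · intro h1; exact (hx.mp ⟨h1, hv⟩).1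
  · intro h1; exact (hx.mpr ⟨h1, hv⟩).1

lemma rPack_anti {N : ℕ} {S T : Set (Euc N)} (h : S ⊆ T) : rPack T ≤ rPack S := by
  unfold rPack
  refine le_iInf₂ fun x hx => le_iInf₂ fun y hy => le_iInf fun hxy => ?_
  exact iInf₂_le_of_le x (h hx) (iInf₂_le_of_le y (h hy) (iInf_le _ hxy))

lemma rPack_lt_exists {N : ℕ} {S : Set (Euc N)} {c : ℝ≥0∞} (h : rPack S < c) :
    ∃ y ∈ S, ∃ y' ∈ S, y ≠ y' ∧ edist y y' / 2 < c := by
  simp only [rPack, iInf_lt_iff] at h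
  obtain ⟨y, hy, y', hy', hne, hlt⟩ := h
  exact ⟨y, hy, y', hy', hne, hlt⟩

end Helpers

/-- A non-periodic linearly repetitive Delone set satisfies the
repulsion property (RP). -/
theorem lr_implies_rp {N : ℕ} (hN : 0 < N) (Λ : Set (Euc N))
    (hΛ : IsDelone Λ) (hnp : NonPeriodic Λ) (hLR : LR Λ) :
    RP Λ := by
  obtain ⟨hud, hrd⟩ := hΛ
  -- the packing-radius constant ρ0
  have hρ' : 0 < min (rPack Λ) 1 := lt_min hud zero_lt_one
  have hρfin : min (rPack Λ) 1 ≠ ⊤ :=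
    ne_top_of_le_ne_top (by simp) (min_le_right _ _)
  set ρ0 : ℝ := (min (rPack Λ) 1).toReal with hρ0def
  have hρ0pos : 0 < ρ0 := ENNReal.toReal_pos hρ'.ne' hρfin
  have hρ0le : ENNReal.ofReal ρ0 ≤ rPack Λ := by
    rw [hρ0def, ENNReal.ofReal_toReal hρfin]; exact min_le_left _ _
  -- the covering-radius constant d
  set d : ℝ := (rCov Λ).toReal + 1 with hddef
  have hd1 : 1 ≤ d := by
    have := ENNReal.toReal_nonneg (a := rCov Λ); simp only [hddef]; linarith
  have hdlt : rCov Λ < ENNReal.ofReal d := by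
    conv_lhs => rw [← ENNReal.ofReal_toReal hrd.ne]
    rw [ENNReal.ofReal_lt_ofReal_iff (by linarith [ENNReal.toReal_nonneg (a := rCov Λ)])]
    simp only [hddef]; linarith
  -- the linear-repetitivity constant C
  set K : ℝ≥0∞ := ⨆ (x ∈ Λ) (R : ℝ) (_ : 1 ≤ R), rCov (locSet Λ x R) / ENNReal.ofReal R
    with hKdef
  have hKlt : K < ⊤ := hLR
  set C : ℝ := K.toReal + 1 with hCdef
  have hC1 : 1 ≤ C := by
    have := ENNReal.toReal_nonneg (a := K); simp only [hCdef]; linarith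
  have hCbound : ∀ z ∈ Λ, ∀ s : ℝ, 1 ≤ s →
      rCov (locSet Λ z s) ≤ ENNReal.ofReal (C * s) := by
    intro z hz s hs
    have h1 : rCov (locSet Λ z s) / ENNReal.ofReal s ≤ K := by
      rw [hKdef]
      exact le_iSup₂_of_le z hz (le_iSup₂_of_le s hs le_rfl)
    have hs0 : ENNReal.ofReal s ≠ 0 := by
      simp [ENNReal.ofReal_eq_zero]; linarith
    rw [ENNReal.div_le_iff hs0 ENNReal.ofReal_ne_top] at h1
    have hKC : K ≤ ENNReal.ofReal C := by
      conv_lhs => rw [← ENNReal.ofReal_toReal hKlt.ne]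
      exact ENNReal.ofReal_le_ofReal (by simp only [hCdef]; linarith)
    calc rCov (locSet Λ z s) ≤ K * ENNReal.ofReal s := h1
      _ ≤ ENNReal.ofReal C * ENNReal.ofReal s :=
          mul_le_mul_left hKC _
      _ = ENNReal.ofReal (C * s) := (ENNReal.ofReal_mul (by linarith)).symm
  -- the small constant ε
  set ε : ℝ := min (1 / (4 * (C + 1))) (ρ0 / (2 * ((C + 1) * d + 1))) with hεdef
  have hεpos : 0 < ε := by
    apply lt_min
    · positivity
    · apply div_pos hρ0pos; nlinarith
  -- key claim : every locater set has packing radius at least ε·R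
  have key : ∀ x ∈ Λ, ∀ R : ℝ, 0 < R →
      ENNReal.ofReal (ε * R) ≤ rPack (locSet Λ x R) := by
    intro x hx R hR
    by_contra hcon
    push_neg at hcon
    have hsub : locSet Λ x R ⊆ Λ := fun z hz => hz.1
    -- extract two close points of the locater set
    obtain ⟨y, hy, y', hy', hne, hlt⟩ := rPack_lt_exists hcon
    have hdist : dist y y' < 2 * (ε * R) := by
      have h2 : edist y y' < ENNReal.ofReal (ε * R) * 2 := by
        rw [← ENNReal.div_lt_iff (Or.inl two_ne_zero) (Or.inl ENNReal.ofNat_ne_top)]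
        exact hlt
      have h3 : ENNReal.ofReal (ε * R) * 2 = ENNReal.ofReal (2 * (ε * R)) := by
        rw [mul_comm (2 : ℝ) (ε * R), ENNReal.ofReal_mul (by positivity : (0:ℝ) ≤ ε * R)]
        congr 1
        norm_num
      rw [h3] at h2
      exact edist_lt_ofReal.mp h2
    set t : Euc N := y' - y with htdef
    have htne : t ≠ 0 := sub_ne_zero_of_ne (Ne.symm hne)
    have htnorm : ‖t‖ < 2 * (ε * R) := by
      rw [htdef, ← dist_eq_norm, dist_comm]; exact hdist
    -- numeric consequences
    have hρlt : ρ0 < ε * R := by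
      have h1 : ENNReal.ofReal ρ0 < ENNReal.ofReal (ε * R) :=
        lt_of_le_of_lt (hρ0le.trans (rPack_anti hsub)) hcon
      exact (ENNReal.ofReal_lt_ofReal_iff_of_nonneg hρ0pos.le).mp h1
    have hε1 : ε * (4 * (C + 1)) ≤ 1 := by
      have := min_le_left (1 / (4 * (C + 1))) (ρ0 / (2 * ((C + 1) * d + 1)))
      rw [← hεdef] at this
      rw [← le_div_iff₀ (by nlinarith)]; exact this
    have hε2 : ε * (2 * ((C + 1) * d + 1)) ≤ ρ0 := by
      have := min_le_right (1 / (4 * (C + 1))) (ρ0 / (2 * ((C + 1) * d + 1)))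
      rw [← hεdef] at this
      rw [← le_div_iff₀ (by nlinarith)]; exact this
    have hDR : 2 * ((C + 1) * d + 1) < R := by
      have h1 : ε * (2 * ((C + 1) * d + 1)) < ε * R := lt_of_le_of_lt hε2 hρlt
      exact lt_of_mul_lt_mul_left h1 hεpos.le
    have hmain : C * (d + ‖t‖) + 1 + d ≤ R := by
      nlinarith [mul_lt_mul_of_pos_left htnorm (by linarith : (0:ℝ) < C + 1),
        mul_le_mul_of_nonneg_right hε1 hR.le, norm_nonneg t, hC1, hd1]
    have hs1 : 1 ≤ d + ‖t‖ := by have := norm_nonneg t; linarith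
    -- the period of the big patch around y
    obtain ⟨hyΛ, hyp⟩ := hy
    obtain ⟨hy'Λ, hy'p⟩ := hy'
    have hA : ∀ v : Euc N, ‖v‖ ≤ R → (y + v ∈ Λ ↔ y' + v ∈ Λ) :=
      patch_eq_period (hyp.trans hy'p.symm)
    -- every point of Λ has t as a local period at radius d
    have hzper : ∀ z ∈ Λ, ∀ v : Euc N, ‖v‖ ≤ d → (z + v ∈ Λ ↔ z + v + t ∈ Λ) := by
      intro z hz v hv
      have hcov : EMetric.infEdist y (locSet Λ z (d + ‖t‖)) <
          ENNReal.ofReal (C * (d + ‖t‖) + 1) := by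
        refine lt_of_le_of_lt (le_iSup (fun p => EMetric.infEdist p (locSet Λ z (d + ‖t‖))) y)
          (lt_of_le_of_lt (hCbound z hz (d + ‖t‖) hs1) ?_)
        rw [ENNReal.ofReal_lt_ofReal_iff (by nlinarith)]
        linarith
      obtain ⟨z₀, hz₀mem, hz₀d⟩ := EMetric.infEdist_lt_iff.mp hcov
      rw [edist_lt_ofReal] at hz₀d
      obtain ⟨hz₀Λ, hz₀p⟩ := hz₀mem
      have htr : ∀ u : Euc N, ‖u‖ ≤ d + ‖t‖ → (z₀ + u ∈ Λ ↔ z + u ∈ Λ) :=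
        patch_eq_period hz₀p
      have hB : ∀ u : Euc N, ‖u‖ ≤ d → (z₀ + u ∈ Λ ↔ z₀ + u + t ∈ Λ) := by
        intro u hu
        have hnb : ‖z₀ - y + u‖ ≤ R := by
          have h1 : ‖z₀ - y + u‖ ≤ ‖z₀ - y‖ + ‖u‖ := norm_add_le _ _
          have h2 : ‖z₀ - y‖ = dist y z₀ := by rw [dist_comm, dist_eq_norm]
          have h3 : 0 ≤ C * ‖t‖ := by positivity
          rw [h2] at h1
          calc ‖z₀ - y + u‖ ≤ dist y z₀ + ‖u‖ := h1
            _ ≤ (C * (d + ‖t‖) + 1) + d := by linarith [hz₀d.le]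
            _ ≤ R := hmain
        have h1 := hA (z₀ - y + u) hnb
        have e1 : y + (z₀ - y + u) = z₀ + u := by abel
        have e2 : y' + (z₀ - y + u) = z₀ + u + t := by rw [htdef]; abel
        rw [e1, e2] at h1
        exact h1
      have h1 : (z + v ∈ Λ) ↔ (z₀ + v ∈ Λ) :=
        (htr v (by have := norm_nonneg t; linarith)).symm
      have h2 := hB v hv
      have h3 : (z₀ + (v + t) ∈ Λ) ↔ (z + (v + t) ∈ Λ) :=
        htr (v + t) (by have := norm_add_le v t; linarith)
      have e1 : z₀ + v + t = z₀ + (v + t) := by abel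
      have e2 : z + (v + t) = z + v + t := by abel
      rw [h1, h2, e1, h3, e2]
    -- t is a global period of Λ
    have hglob : ∀ w : Euc N, w ∈ Λ ↔ w + t ∈ Λ := by
      intro w
      have hcov2 : EMetric.infEdist w Λ < ENNReal.ofReal d :=
        lt_of_le_of_lt (le_iSup (fun p => EMetric.infEdist p Λ) w) hdlt
      obtain ⟨z, hzΛ, hzd⟩ := EMetric.infEdist_lt_iff.mp hcov2
      rw [edist_lt_ofReal] at hzd
      have h1 := hzper z hzΛ (w - z) (by rw [← dist_eq_norm]; linarith)
      have e1 : z + (w - z) = w := by abel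
      rw [e1] at h1
      exact h1
    -- contradiction with non-periodicity
    have himg : (fun p => p - t) '' Λ = Λ := by
      ext p
      constructor
      · rintro ⟨a, ha, rfl⟩
        have h1 := hglob (a - t)
        have e1 : a - t + t = a := by abel
        rw [e1] at h1
        exact h1.mpr ha
      · intro hp
        exact ⟨p + t, (hglob p).mp hp, by simp⟩
    exact hnp t htne himg
  -- conclude RP
  unfold RP
  have hle : ENNReal.ofReal ε ≤
      ⨅ (x ∈ Λ) (R : ℝ) (_ : 0 < R), rPack (locSet Λ x R) / ENNReal.ofReal R := by
    refine le_iInf₂ fun x hx => le_iInf₂ fun R hR => ?_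
    have hR0 : ENNReal.ofReal R ≠ 0 := by simp [ENNReal.ofReal_eq_zero]; linarith
    have heq : ENNReal.ofReal ε = ENNReal.ofReal (ε * R) / ENNReal.ofReal R := by
      rw [ENNReal.ofReal_mul hεpos.le, mul_div_assoc,
        ENNReal.div_self hR0 ENNReal.ofReal_ne_top, mul_one]
    rw [heq]
    exact ENNReal.div_le_div_right (key x hx R hR) _
  exact lt_of_lt_of_le (ENNReal.ofReal_pos.mpr hεpos) hle
end

section
/- Let Λ ⊆ ℝ^N be a Delone set. If Λ is linearly repetitive (LR), then Λ satisfies positivity of quasiweights (PQ), i.e. inf{ν'(P) : P a ball pattern on Λ with r(P) ≥ 1} > 0. -/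
open Filter MeasureTheory Bornology
open scoped ENNReal

noncomputable section

/-!
By (LR) there is `c > 0` such that every ball of radius `c R` contains a point of the locater
set of any pattern of radius `R ≥ 1`. Lay a grid of mesh `2 (R + c R)` in a cube of side `s` and
pick such a point near each grid point: this gives about `(s / (2 (1 + c) R)) ^ N` copies of the
pattern whose `R`-balls are pairwise disjoint and lie in the cube, so
`ν'(P) ≥ |B_1| / (4 (1 + c)) ^ N` uniformly in `P`. Comparing volumes, `♯'_P C · |B_R| ≤ |C|`,
which keeps the supremum defining `♯'` and the liminf defining `ν'` away from their junk values.
-/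

open Metric

section Geometry

variable {N : ℕ}

lemma cube_eq_preimage_Icc (a : Euc N) (s : ℝ) :
    cube a s = WithLp.ofLp ⁻¹' Set.Icc (WithLp.ofLp a) (WithLp.ofLp a + fun _ => s) := by
  ext p
  simp [cube, Pi.le_def, forall_and]

lemma volume_cube (a : Euc N) (s : ℝ) : volume (cube a s) = ENNReal.ofReal s ^ N := by
  rw [cube_eq_preimage_Icc]
  refine ((EuclideanSpace.volume_preserving_symm_measurableEquiv_toLp (Fin N)).measure_preimage
    measurableSet_Icc.nullMeasurableSet).trans ?_
  simp [Real.volume_Icc_pi]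

lemma closedBall_subset_cube {a q : Euc N} {s r : ℝ}
    (h : ∀ i, a i + r ≤ q i ∧ q i + r ≤ a i + s) : closedBall q r ⊆ cube a s := by
  intro p hp i
  have hpi := abs_le.1 ((Real.dist_eq _ _).symm.trans_le ((PiLp.dist_apply_le p q i).trans hp))
  constructor <;> linarith [h i]

lemma exists_separated_grid_in_cube (a : Euc N) (s : ℝ) {D : ℝ} (hD : 0 < D) :
    ∃ q : (Fin N → Fin ⌊s / D⌋₊) → Euc N, (∀ k k', k ≠ k' → D ≤ dist (q k) (q k')) ∧
      ∀ k, closedBall (q k) (D / 2) ⊆ cube a s := by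
  set q : (Fin N → Fin ⌊s / D⌋₊) → Euc N := fun k => WithLp.toLp 2 fun i => a i + D / 2 + k i * D
  have hq : ∀ k i, q k i = a i + D / 2 + k i * D := fun _ _ => rfl
  refine ⟨q, fun k k' hkk' => ?_, fun k => closedBall_subset_cube fun i => ⟨?_, ?_⟩⟩
  · obtain ⟨i, hi⟩ := Function.ne_iff.1 hkk'
    have hki : (1 : ℝ) ≤ |(k i : ℝ) - k' i| := by
      have : ((k i : ℕ) : ℤ) ≠ (k' i : ℕ) := by exact_mod_cast Fin.val_ne_of_ne hi
      exact_mod_cast Int.one_le_abs (sub_ne_zero.2 this)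
    have hqkk' : q k i - q k' i = ((k i : ℝ) - k' i) * D := by rw [hq, hq]; ring
    calc D ≤ |(k i : ℝ) - k' i| * D := le_mul_of_one_le_left hD.le hki
      _ = dist (q k i) (q k' i) := by rw [Real.dist_eq, hqkk', abs_mul, abs_of_pos hD]
      _ ≤ dist (q k) (q k') := PiLp.dist_apply_le _ _ i
  · rw [hq]
    nlinarith [Nat.cast_nonneg (α := ℝ) (k i)]
  · have hk : ((k i + 1 : ℕ) : ℝ) ≤ s / D := (Nat.le_floor_iff' (by omega)).1 (k i).2
    push_cast at hk
    rw [le_div_iff₀ hD] at hk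
    rw [hq]
    linarith

end Geometry

section Counting

variable {N : ℕ}

lemma ballVol_pos {R : ℝ} (hR : 0 < R) : 0 < ballVol N R :=
  ENNReal.toReal_pos (measure_closedBall_pos volume _ hR).ne' measure_closedBall_lt_top.ne

lemma ballVol_eq_pow_mul {R : ℝ} (hR : 0 ≤ R) : ballVol N R = R ^ N * ballVol N 1 := by
  simp [ballVol, Measure.addHaar_closedBall _ _ hR, Measure.addHaar_closedBall _ _ zero_le_one,
    ENNReal.toReal_ofReal (pow_nonneg hR _)]

lemma card_mul_volume_closedBall_le {Q : Set (Euc N)} {R : ℝ} (A : Finset (Euc N))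
    (hA : ∀ y ∈ A, closedBall y R ⊆ Q) (hsep : ∀ u ∈ A, ∀ v ∈ A, u ≠ v → 2 * R < dist u v) :
    A.card * volume (closedBall (0 : Euc N) R) ≤ volume Q :=
  calc A.card * volume (closedBall (0 : Euc N) R) = ∑ y ∈ A, volume (closedBall y R) := by
        simp [Measure.addHaar_closedBall_center]
    _ = volume (⋃ y ∈ A, closedBall y R) := by
        refine (measure_biUnion_finset (fun u hu v hv huv => ?_)
          fun _ _ => measurableSet_closedBall).symm
        exact closedBall_disjoint_closedBall (by linarith [hsep u hu v hv huv])
    _ ≤ volume Q := measure_mono (Set.iUnion₂_subset hA)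

variable (Λ : Set (Euc N)) (x : Euc N) {R : ℝ} {Q : Set (Euc N)}

def disjointCopyCounts (Λ : Set (Euc N)) (x : Euc N) (R : ℝ) (Q : Set (Euc N)) : Set ℕ :=
  {n | ∃ A : Finset (Euc N), ↑A ⊆ locIn Λ x R Q ∧
    (∀ u ∈ A, ∀ v ∈ A, u ≠ v → 2 * R < dist u v) ∧ A.card = n}

lemma countP'_eq_sSup : countP' Λ x R Q = sSup (disjointCopyCounts Λ x R Q) := rfl

lemma card_mul_ballVol_le_of_subset_locIn (hQ : volume Q ≠ ⊤) {A : Finset (Euc N)}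
    (hA : ↑A ⊆ locIn Λ x R Q) (hsep : ∀ u ∈ A, ∀ v ∈ A, u ≠ v → 2 * R < dist u v) :
    A.card * ballVol N R ≤ (volume Q).toReal := by
  have h := card_mul_volume_closedBall_le A (fun y hy => (hA hy).2) hsep
  rw [ballVol, ← ENNReal.toReal_natCast, ← ENNReal.toReal_mul]
  exact ENNReal.toReal_mono hQ h

lemma bddAbove_disjointCopyCounts (hR : 0 < R) (hQ : volume Q ≠ ⊤) :
    BddAbove (disjointCopyCounts Λ x R Q) := by
  refine ⟨⌊(volume Q).toReal / ballVol N R⌋₊, ?_⟩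
  rintro _ ⟨A, hA, hsep, rfl⟩
  exact Nat.le_floor <| (le_div_iff₀ (ballVol_pos hR)).2 <|
    card_mul_ballVol_le_of_subset_locIn Λ x hQ hA hsep

lemma countP'_mul_ballVol_le (hR : 0 < R) (hQ : volume Q ≠ ⊤) :
    countP' Λ x R Q * ballVol N R ≤ (volume Q).toReal := by
  obtain ⟨A, hA, hsep, hcard⟩ :=
    Nat.sSup_mem (s := disjointCopyCounts Λ x R Q) ⟨0, ∅, by simp, by simp, rfl⟩
      (bddAbove_disjointCopyCounts Λ x hR hQ)
  rw [countP'_eq_sSup, ← hcard]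
  exact card_mul_ballVol_le_of_subset_locIn Λ x hQ hA hsep

lemma card_le_countP' (hR : 0 < R) (hQ : volume Q ≠ ⊤) {A : Finset (Euc N)}
    (hA : ↑A ⊆ locIn Λ x R Q) (hsep : ∀ u ∈ A, ∀ v ∈ A, u ≠ v → 2 * R < dist u v) :
    A.card ≤ countP' Λ x R Q :=
  le_csSup (bddAbove_disjointCopyCounts Λ x hR hQ) ⟨A, hA, hsep, rfl⟩

end Counting

section Density

variable {N : ℕ} {Λ : Set (Euc N)} {x : Euc N} {R ρ : ℝ}

lemma pow_floor_le_countP'_cube (hR : 0 < R)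
    (hcover : ∀ p, ∃ y ∈ locSet Λ x R, dist p y < ρ) (a : Euc N) (s : ℝ) :
    ⌊s / (2 * (R + ρ))⌋₊ ^ N ≤ countP' Λ x R (cube a s) := by
  classical
  have hρ : 0 < ρ := let ⟨_, _, h⟩ := hcover 0; dist_nonneg.trans_lt h
  obtain ⟨q, hq_sep, hq_cube⟩ := exists_separated_grid_in_cube a s (D := 2 * (R + ρ))
    (by positivity)
  choose y hy_loc hy_dist using fun k => hcover (q k)
  have hy_sep : ∀ k k', k ≠ k' → 2 * R < dist (y k) (y k') := fun k k' hkk' => by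
    linarith [dist_triangle4 (q k) (y k) (y k') (q k'), hq_sep k k' hkk', hy_dist k, hy_dist k',
      dist_comm (y k') (q k')]
  have hy_mem : ∀ k, y k ∈ locIn Λ x R (cube a s) := fun k => by
    refine ⟨hy_loc k, (closedBall_subset_closedBall' ?_).trans (hq_cube k)⟩
    linarith [dist_comm (y k) (q k), hy_dist k]
  have hy_inj : Function.Injective y := fun k k' h => by
    by_contra hkk'
    have := hy_sep k k' hkk'
    rw [h, dist_self] at this
    linarith
  calc ⌊s / (2 * (R + ρ))⌋₊ ^ N = (Finset.univ.image y).card := by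
        rw [Finset.card_image_of_injective _ hy_inj]; simp
    _ ≤ countP' Λ x R (cube a s) := by
        refine card_le_countP' Λ x hR (by simp [volume_cube])
          (by simpa [Set.subset_def] using hy_mem) ?_
        simp only [Finset.mem_image, Finset.mem_univ, true_and]
        rintro _ ⟨k, rfl⟩ _ ⟨k', rfl⟩ hkk'
        exact hy_sep k k' fun h => hkk' (congrArg y h)

lemma ballVol_div_le_nu' (hR : 0 < R) (hcover : ∀ p, ∃ y ∈ locSet Λ x R, dist p y < ρ) :
    ballVol N R / (4 * (R + ρ)) ^ N ≤ nu' Λ x R := by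
  have hρ : 0 < ρ := let ⟨_, _, h⟩ := hcover 0; dist_nonneg.trans_lt h
  have hV := ballVol_pos (N := N) hR
  set D := 2 * (R + ρ)
  have hD : 0 < D := by positivity
  have hside : Tendsto Prod.snd (cubeFilter N) atTop := tendsto_snd
  have : (cubeFilter N).NeBot := by unfold cubeFilter; infer_instance
  apply le_liminf_of_le
  · refine (isBoundedUnder_of_eventually_le (a := 1) ?_).isCoboundedUnder_ge
    filter_upwards [hside.eventually_gt_atTop 0] with ⟨a, s⟩ hs
    rw [div_le_one (by positivity)]
    simpa [volume_cube, hs.le] using countP'_mul_ballVol_le Λ x hR (Q := cube a s)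
      (by simp [volume_cube])
  · filter_upwards [hside.eventually_ge_atTop (2 * D)] with ⟨a, s⟩ hs
    have hs0 : 0 < s := by dsimp only at hs; linarith
    have hfloor : s / (2 * D) ≤ ⌊s / D⌋₊ := by
      have h2 : 2 ≤ s / D := (le_div_iff₀ hD).2 (by linarith)
      rw [mul_comm, ← div_div]
      linarith [Nat.sub_one_lt_floor (s / D)]
    have hcount : (s / (2 * D)) ^ N ≤ countP' Λ x R (cube a s) :=
      (pow_le_pow_left₀ (by positivity) hfloor N).trans
        (by exact_mod_cast pow_floor_le_countP'_cube hR hcover a s)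
    calc ballVol N R / (4 * (R + ρ)) ^ N = (s / (2 * D)) ^ N * ballVol N R / s ^ N := by
          rw [div_pow]; field_simp; ring
      _ ≤ countP' Λ x R (cube a s) * ballVol N R / s ^ N := by gcongr

lemma ballVol_one_div_le_nu' {c : ℝ} (hR : 0 < R)
    (hcover : ∀ p, ∃ y ∈ locSet Λ x R, dist p y < c * R) :
    ballVol N 1 / (4 * (1 + c)) ^ N ≤ nu' Λ x R := by
  convert ballVol_div_le_nu' hR hcover using 1
  rw [ballVol_eq_pow_mul hR.le, show 4 * (R + c * R) = R * (4 * (1 + c)) by ring, mul_pow R,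
    mul_div_mul_left _ _ (pow_ne_zero _ hR.ne')]

end Density

section LinearRepetitivity

variable {N : ℕ} {Λ : Set (Euc N)}

lemma RelativelyDense.nonempty (h : RelativelyDense Λ) : Λ.Nonempty := by
  rw [Set.nonempty_iff_ne_empty]
  rintro rfl
  change ⨆ p : Euc N, infEDist p ∅ < ⊤ at h
  simp at h

lemma LR.exists_forall_dist_lt (h : LR Λ) :
    ∃ c > 0, ∀ x ∈ Λ, ∀ R : ℝ, 1 ≤ R → ∀ p, ∃ y ∈ locSet Λ x R, dist p y < c * R := by
  set M := ⨆ (x ∈ Λ) (R : ℝ) (_ : 1 ≤ R), rCov (locSet Λ x R) / ENNReal.ofReal R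
  refine ⟨M.toReal + 1, by positivity, fun x hx R hR p => ?_⟩
  have hR0 : 0 < R := by linarith
  have hratio : rCov (locSet Λ x R) / ENNReal.ofReal R ≤ M :=
    le_iSup₂_of_le x hx (le_iSup₂_of_le R hR le_rfl)
  have hlt : infEDist p (locSet Λ x R) < ENNReal.ofReal ((M.toReal + 1) * R) :=
    calc infEDist p (locSet Λ x R) ≤ rCov (locSet Λ x R) := le_iSup (fun q => infEDist q _) p
      _ ≤ M * ENNReal.ofReal R :=
        (ENNReal.div_le_iff (by simpa using hR0) ENNReal.ofReal_ne_top).1 hratio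
      _ = ENNReal.ofReal (M.toReal * R) := by
        rw [ENNReal.ofReal_mul ENNReal.toReal_nonneg, ENNReal.ofReal_toReal h.ne]
      _ < ENNReal.ofReal ((M.toReal + 1) * R) := by
        rw [ENNReal.ofReal_lt_ofReal_iff (by positivity)]
        nlinarith
  obtain ⟨y, hy, hpy⟩ := infEDist_lt_iff.1 hlt
  exact ⟨y, hy, edist_lt_ofReal.1 hpy⟩

end LinearRepetitivity

theorem lr_implies_pq_general {N : ℕ} (Λ : Set (Euc N))
    (hΛ : IsDelone Λ) (hLR : LR Λ) :
    PQ Λ := by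
  obtain ⟨c, hc, hcover⟩ := hLR.exists_forall_dist_lt
  obtain ⟨x₀, hx₀⟩ := hΛ.2.nonempty
  have hbound : ∀ v ∈ {v | ∃ x ∈ Λ, ∃ R : ℝ, 1 ≤ R ∧ v = nu' Λ x R},
      ballVol N 1 / (4 * (1 + c)) ^ N ≤ v := by
    rintro _ ⟨x, hx, R, hR, rfl⟩
    exact ballVol_one_div_le_nu' (by linarith) (hcover x hx R hR)
  exact (div_pos (ballVol_pos one_pos) (by positivity)).trans_le
    (le_csInf ⟨_, x₀, hx₀, 1, le_rfl, rfl⟩ hbound)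

/-- A linearly repetitive Delone set satisfies positivity of
quasiweights (PQ). -/
theorem lr_implies_pq {N : ℕ} (hN : 0 < N) (Λ : Set (Euc N))
    (hΛ : IsDelone Λ) (hLR : LR Λ) :
    PQ Λ :=
  lr_implies_pq_general Λ hΛ hLR
end
end

section
/- Let Λ ⊆ ℝ^N be a Delone set satisfying positivity of weights (PW). Then Λ is repetitive, i.e. for every ball pattern P on Λ the locater set L_P is relatively dense in ℝ^N. -/
open Filter MeasureTheory Bornology
open scoped ENNReal

noncomputable section

/-- Locater sets are antitone in the radius. -/
lemma locSet_mono {N : ℕ} (Λ : Set (Euc N)) (x : Euc N) {R R' : ℝ} (h : R ≤ R') :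
    locSet Λ x R' ⊆ locSet Λ x R := by
  rintro y ⟨hy, hp⟩
  refine ⟨hy, ?_⟩
  have hB : Metric.closedBall (0 : Euc N) R ⊆ Metric.closedBall 0 R' :=
    Metric.closedBall_subset_closedBall h
  have key : ∀ z : Euc N, patch Λ z R = patch Λ z R' ∩ Metric.closedBall 0 R := by
    intro z
    unfold patch
    rw [Set.inter_assoc, Set.inter_eq_right.mpr hB]
  rw [key y, key x, hp]

/-- If a point is very far from the locater set, the corresponding cube contains
no copies of the pattern. -/
lemma locIn_cube_empty {N : ℕ} (Λ : Set (Euc N)) (x p : Euc N) {R s : ℝ}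
    (hR : 0 ≤ R) (hs : 0 ≤ s)
    (hp : ENNReal.ofReal (Real.sqrt N * s) < EMetric.infEdist p (locSet Λ x R)) :
    locIn Λ x R (cube p s) = ∅ := by
  ext y
  simp only [Set.mem_empty_iff_false, iff_false]
  rintro ⟨hyL, hball⟩
  have hy : y ∈ cube p s := hball (Metric.mem_closedBall_self hR)
  have hd : dist y p ≤ Real.sqrt N * s := by
    rw [EuclideanSpace.dist_eq]
    have hsum : ∑ i, dist (y i) (p i) ^ 2 ≤ (N : ℝ) * s ^ 2 := by
      have : ∀ i ∈ Finset.univ, dist (y i) (p i) ^ 2 ≤ s ^ 2 := by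
        intro i _
        have h1 := (hy i).1
        have h2 := (hy i).2
        have hds : dist (y i) (p i) ≤ s := by
          rw [Real.dist_eq, abs_le]; constructor <;> linarith
        exact pow_le_pow_left₀ dist_nonneg hds 2
      calc ∑ i, dist (y i) (p i) ^ 2 ≤ ∑ _i : Fin N, s ^ 2 := Finset.sum_le_sum this
        _ = (N : ℝ) * s ^ 2 := by
          simp [Finset.sum_const, nsmul_eq_mul]
    calc Real.sqrt (∑ i, dist (y i) (p i) ^ 2) ≤ Real.sqrt ((N : ℝ) * s ^ 2) :=
          Real.sqrt_le_sqrt hsum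
      _ = Real.sqrt N * s := by
          rw [Real.sqrt_mul (Nat.cast_nonneg N), Real.sqrt_sq hs]
  have hle : EMetric.infEdist p (locSet Λ x R) ≤ ENNReal.ofReal (Real.sqrt N * s) := by
    refine le_trans (EMetric.infEdist_le_edist_of_mem hyL) ?_
    rw [edist_dist, dist_comm]
    exact ENNReal.ofReal_le_ofReal hd
  exact absurd hle (not_le.mpr hp)

/-- If the locater set of `(x,R)` is not relatively dense then `ν(x,R) ≤ 0`. -/
lemma nu_nonpos_of_rCov_top {N : ℕ} (Λ : Set (Euc N)) (x : Euc N) {R : ℝ}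
    (hR : 0 ≤ R) (htop : rCov (locSet Λ x R) = ⊤) : nu Λ x R ≤ 0 := by
  rw [nu, liminf_eq]
  refine Real.sSup_le ?_ le_rfl
  intro a ha
  rw [Set.mem_setOf_eq, cubeFilter, eventually_prod_iff] at ha
  obtain ⟨pa, hpa, pb, hpb, himp⟩ := ha
  obtain ⟨s₀, hs₀⟩ := eventually_atTop.mp hpb
  set s : ℝ := max s₀ 1 with hsdef
  have hs1 : (1 : ℝ) ≤ s := le_max_right _ _
  have hM : ENNReal.ofReal (Real.sqrt N * s) < rCov (locSet Λ x R) := by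
    rw [htop]; exact ENNReal.ofReal_lt_top
  rw [rCov, lt_iSup_iff] at hM
  obtain ⟨p, hp⟩ := hM
  have h0 : locIn Λ x R (cube p s) = ∅ :=
    locIn_cube_empty Λ x p hR (by linarith) hp
  have hc : countP Λ x R (cube p s) = 0 := by
    rw [countP, h0, Set.ncard_empty]
  have := himp (eventually_top.mp hpa p) (hs₀ s (le_max_left _ _))
  rw [hc] at this
  simpa using this

end

/-- A Delone set satisfying (PW) is repetitive. -/
theorem pw_implies_repetitive {N : ℕ} (hN : 0 < N) (Λ : Set (Euc N))
    (hΛ : IsDelone Λ) (hPW : PW Λ) :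
    Repetitive Λ := by
  intro x hx R hR
  set R' : ℝ := max R 1 with hR'def
  have hR1 : (1 : ℝ) ≤ R' := le_max_right _ _
  have hRR' : R ≤ R' := le_max_left _ _
  have hsub : locSet Λ x R' ⊆ locSet Λ x R := locSet_mono Λ x hRR'
  suffices h : RelativelyDense (locSet Λ x R') by
    refine lt_of_le_of_lt ?_ h
    exact iSup_mono fun p => EMetric.infEdist_anti hsub
  by_contra hcon
  have htop : rCov (locSet Λ x R') = ⊤ := top_le_iff.mp (not_lt.mp hcon)
  have hnu : nu Λ x R' ≤ 0 := nu_nonpos_of_rCov_top Λ x (by linarith) htop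
  have hmem : nu Λ x R' ∈ {v | ∃ x ∈ Λ, ∃ R : ℝ, 1 ≤ R ∧ v = nu Λ x R} :=
    ⟨x, hx, R', hR1, rfl⟩
  rw [PW, wPW] at hPW
  by_cases hb : BddBelow {v | ∃ x ∈ Λ, ∃ R : ℝ, 1 ≤ R ∧ v = nu Λ x R}
  · have := csInf_le hb hmem
    linarith
  · rw [Real.sInf_of_not_bddBelow hb] at hPW
    exact lt_irrefl 0 hPW
end
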